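/- (Theorem 3, core rank statement) Let F be a global function field of genus g > 0 over F_q with distinct rational places P₁, …, P_s, P_∞, and D a positive divisor with deg D = 2g and supp(D) ∩ {P_∞, P₂, …, P_s} = ∅. Let β_j^{(i)} be as in Lemma 3, and w₁, …, w_g a basis of L(D − P₁) as in Section 4. Suppose m > g, d₁, …, d_s ∈ ℕ₀ with 1 ≤ d₁ + ⋯ + d_s ≤ m − g, b_j^{(i)} ∈ F_q, α := Σ_i Σ_j b_j^{(i)} Σ_f a_{j,n_f}^{(i)} w_f ∈ L(D − P₁), and β := Σ_i Σ_{j≤d_i} b_j^{(i)} β_j^{(i)} − α satisfies ν_{P_∞}(β) ≥ m + g. Then all b_j^{(i)} = 0. -/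

import Mathlib

/-!
`β` lies in `L(D + d₁P₁ + ⋯ + d_sP_s - P₁)` and has valuation `≥ m + g` at `P_∞`, so it lies in a
Riemann–Roch space of degree `2g + Σ dᵢ - 1 - (m + g) < 0` and is `0`. Hence `Σ b_j^{(i)} β_j^{(i)}`
lies in `L(D - P₁)`. At `P_i` the `β_j^{(i)}` have the distinct pole orders `j` (shifted by `D(P₁) - 1`
for `i = 1`), larger than that of any other term, so downward induction on `j` kills every coefficient.
-/

open scoped BigOperators

/-- An algebraic function field `F` of one variable over the full constant field `K`,
presented through the set of its places: each place `P` has a normalized discrete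
valuation `v P` (its value on `0` is irrelevant/junk) and a degree `deg P ≥ 1`.
The axioms are the standard facts: multiplicativity and the ultrametric inequality of
valuations, triviality on constants, finiteness of the support of a principal divisor,
the degree formula `deg(div f) = 0`, the full-constant-field property, and the fact
that places of degree one have residue field `K`. -/
structure FFPlaces (K F : Type*) [Field K] [Field F] [Algebra K F] where
  Place : Type
  v : Place → F → ℤ
  deg : Place → ℕ
  deg_pos : ∀ P, 0 < deg P
  v_mul : ∀ (P) (x y : F), x ≠ 0 → y ≠ 0 → v P (x * y) = v P x + v P y
  v_add : ∀ (P) (x y : F), x ≠ 0 → y ≠ 0 → x + y ≠ 0 → min (v P x) (v P y) ≤ v P (x + y)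
  v_algebraMap : ∀ (P) (c : K), c ≠ 0 → v P (algebraMap K F c) = 0
  finite_support : ∀ f : F, f ≠ 0 → {P | v P f ≠ 0}.Finite
  degree_formula : ∀ f : F, f ≠ 0 → (∑ᶠ P, (deg P : ℤ) * v P f) = 0
  full_constants : ∀ f : F, f ≠ 0 → (∀ P, 0 ≤ v P f) → ∃ c : K, f = algebraMap K F c
  residue_one : ∀ P, deg P = 1 → ∀ f g : F, f ≠ 0 → g ≠ 0 → v P f = v P g →
      ∃ c : K, f = algebraMap K F c * g ∨ v P f < v P (f - algebraMap K F c * g)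

namespace FFPlaces

variable {K F : Type*} [Field K] [Field F] [Algebra K F]

/-- The degree of a divisor (a finitely supported `ℤ`-valued function on places). -/
def degD (FF : FFPlaces K F) (D : FF.Place →₀ ℤ) : ℤ :=
  ∑ P ∈ D.support, (FF.deg P : ℤ) * D P

/-- The Riemann–Roch space `L(D) = {f ∈ F* : div f + D ≥ 0} ∪ {0}` of a divisor `D`,
as a `K`-subspace of `F`. -/
def RR (FF : FFPlaces K F) (D : FF.Place →₀ ℤ) : Submodule K F where
  carrier := {f | f = 0 ∨ ∀ P, -(D P) ≤ FF.v P f}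
  zero_mem' := Or.inl rfl
  add_mem' := by
    intro a b ha hb
    simp only [Set.mem_setOf_eq] at *
    by_cases ha0 : a = 0
    · simpa [ha0] using hb
    by_cases hb0 : b = 0
    · simpa [hb0] using ha
    by_cases hab : a + b = 0
    · exact Or.inl hab
    have ha' := ha.resolve_left ha0
    have hb' := hb.resolve_left hb0
    exact Or.inr fun P =>
      le_trans (le_min (ha' P) (hb' P)) (FF.v_add P a b ha0 hb0 hab)
  smul_mem' := by
    intro c x hx
    simp only [Set.mem_setOf_eq] at *
    by_cases hc : c = 0
    · left; simp [hc]
    by_cases hx0 : x = 0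
    · left; simp [hx0]
    have hx' := hx.resolve_left hx0
    have halg : algebraMap K F c ≠ 0 :=
      (map_ne_zero_iff (algebraMap K F) (RingHom.injective _)).mpr hc
    refine Or.inr fun P => ?_
    rw [Algebra.smul_def, FF.v_mul P _ x halg hx0, FF.v_algebraMap P c hc]
    simpa using hx' P

end FFPlaces

open Finset Finsupp

namespace FFPlaces

variable {K F : Type*} [Field K] [Field F] [Algebra K F] (FF : FFPlaces K F)

theorem v_smul (Q : FF.Place) {c : K} (hc : c ≠ 0) {x : F} (hx : x ≠ 0) :
    FF.v Q (c • x) = FF.v Q x := by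
  have hc' : algebraMap K F c ≠ 0 := (map_ne_zero_iff _ (algebraMap K F).injective).mpr hc
  rw [Algebra.smul_def, FF.v_mul Q _ x hc' hx, FF.v_algebraMap Q c hc, zero_add]

def valGE (Q : FF.Place) (c : ℤ) : Submodule K F where
  carrier := {f | f = 0 ∨ c ≤ FF.v Q f}
  zero_mem' := Or.inl rfl
  add_mem' := by
    rintro x y (rfl | hx) (rfl | hy)
    · simp
    · simp [hy]
    · simp [hx]
    by_cases hx0 : x = 0
    · simp [hx0, hy]
    by_cases hy0 : y = 0
    · simp [hy0, hx]
    by_cases hxy : x + y = 0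
    · exact Or.inl hxy
    exact Or.inr ((le_min hx hy).trans (FF.v_add Q x y hx0 hy0 hxy))
  smul_mem' := by
    rintro c x (rfl | hx)
    · simp
    by_cases hc : c = 0
    · simp [hc]
    by_cases hx0 : x = 0
    · simp [hx0]
    exact Or.inr ((FF.v_smul Q hc hx0).symm ▸ hx)

variable {FF}

theorem mem_valGE_iff {Q : FF.Place} {c : ℤ} {f : F} :
    f ∈ FF.valGE Q c ↔ f = 0 ∨ c ≤ FF.v Q f := Iff.rfl

theorem valGE_antitone (Q : FF.Place) : Antitone (FF.valGE Q) := by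
  rintro c c' hcc' f (hf | hf)
  exacts [Or.inl hf, Or.inr (hcc'.trans hf)]

theorem notMem_valGE {Q : FF.Place} {c : ℤ} {f : F} (hf : f ≠ 0) (hlt : FF.v Q f < c) :
    f ∉ FF.valGE Q c := by
  rintro (h | h)
  exacts [hf h, hlt.not_ge h]

theorem RR_mono : Monotone FF.RR := by
  rintro E E' hE f (hf | hf)
  exacts [Or.inl hf, Or.inr fun R => (neg_le_neg (hE R)).trans (hf R)]

theorem RR_le_valGE {E : FF.Place →₀ ℤ} (Q : FF.Place) {c : ℤ} (hc : c ≤ -E Q) :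
    FF.RR E ≤ FF.valGE Q c := by
  rintro f (hf | hf)
  exacts [Or.inl hf, Or.inr (hc.trans (hf Q))]

theorem mem_RR_sub_single {E : FF.Place →₀ ℤ} {Q : FF.Place} {k : ℤ} {f : F}
    (hf : f ∈ FF.RR E) (hQ : f ∈ FF.valGE Q (k - E Q)) : f ∈ FF.RR (E - single Q k) := by
  classical
  rcases hf with hf | hf
  · exact Or.inl hf
  rcases hQ with hQ | hQ
  · exact Or.inl hQ
  refine Or.inr fun R => ?_
  by_cases hR : R = Q
  · subst hR; simpa using hQ
  · simpa [single_apply, Ne.symm hR] using hf R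

theorem v_eq_of_mem_RR_add_single {E : FF.Place →₀ ℤ} {Q : FF.Place} {k : ℤ} {f : F}
    (h : f ∈ FF.RR (E + single Q k)) (h' : f ∉ FF.RR (E + single Q (k - 1))) :
    f ≠ 0 ∧ FF.v Q f = -E Q - k := by
  have hf : f ≠ 0 := fun hf => h' (Or.inl hf)
  refine ⟨hf, le_antisymm ?_ (by simpa [sub_eq_add_neg, add_comm] using (h.resolve_left hf) Q)⟩
  by_contra! hlt
  refine h' ?_
  rw [single_sub, ← add_sub_assoc]
  exact mem_RR_sub_single h (Or.inr (by simp; omega))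

theorem degD_add (E E' : FF.Place →₀ ℤ) : FF.degD (E + E') = FF.degD E + FF.degD E' :=
  sum_add_index' (fun _ => mul_zero _) fun _ _ _ => mul_add _ _ _

variable (FF) in
noncomputable def degDHom : (FF.Place →₀ ℤ) →+ ℤ := AddMonoidHom.mk' FF.degD degD_add

theorem degDHom_apply (E : FF.Place →₀ ℤ) : FF.degDHom E = FF.degD E := rfl

theorem degD_single (Q : FF.Place) (k : ℤ) : FF.degD (single Q k) = FF.deg Q * k :=
  sum_single_index (mul_zero _)

theorem degD_nonneg_of_mem_RR {E : FF.Place →₀ ℤ} {f : F} (hf : f ∈ FF.RR E) (hf0 : f ≠ 0) :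
    0 ≤ FF.degD E := by
  classical
  have hv := hf.resolve_left hf0
  set T := E.support ∪ (FF.finite_support f hf0).toFinset
  have hdiv : ∑ R ∈ T, (FF.deg R : ℤ) * FF.v R f = 0 := by
    rw [← finsum_eq_sum_of_support_subset, FF.degree_formula f hf0]
    intro R hR
    simp [T, right_ne_zero_of_mul hR]
  have hE : FF.degD E = ∑ R ∈ T, (FF.deg R : ℤ) * E R :=
    Finset.sum_subset subset_union_left fun R _ hR => by simp [notMem_support_iff.1 hR]
  calc 0 ≤ ∑ R ∈ T, (FF.deg R : ℤ) * (E R + FF.v R f) :=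
        sum_nonneg fun R _ => mul_nonneg (by positivity) (by linarith [hv R])
    _ = FF.degD E := by simp only [mul_add, sum_add_distrib, hdiv, hE, add_zero]

theorem eq_zero_of_mem_RR_of_degD_neg {E : FF.Place →₀ ℤ} {f : F} (hf : f ∈ FF.RR E)
    (hE : FF.degD E < 0) : f = 0 := by
  by_contra hf0
  exact hE.not_ge (degD_nonneg_of_mem_RR hf hf0)

theorem eq_zero_of_sum_Icc_smul_mem_valGE {Q : FF.Place} {r : ℤ} {x : ℕ → F} {c : ℕ → K}
    (hx : ∀ j, 1 ≤ j → x j ≠ 0 ∧ FF.v Q (x j) = r - j) (N : ℕ)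
    (hsum : ∑ j ∈ Icc 1 N, c j • x j ∈ FF.valGE Q r) : ∀ j, 1 ≤ j → j ≤ N → c j = 0 := by
  induction N with
  | zero => intro j hj hjN; omega
  | succ N ih =>
    rw [sum_Icc_succ_top (by omega)] at hsum
    have hlow : ∑ j ∈ Icc 1 N, c j • x j ∈ FF.valGE Q (r - N) :=
      Submodule.sum_mem _ fun j hj => Submodule.smul_mem _ _ <| by
        obtain ⟨hj1, hjN⟩ := mem_Icc.1 hj
        exact Or.inr (by rw [(hx j hj1).2]; omega)
    have htop : c (N + 1) = 0 := by
      by_contra hc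
      obtain ⟨hx0, hxv⟩ := hx (N + 1) (by omega)
      refine notMem_valGE (Q := Q) (c := r - N) (smul_ne_zero hc hx0) ?_ ?_
      · rw [FF.v_smul Q hc hx0, hxv]; push_cast; omega
      · simpa using Submodule.sub_mem _ (valGE_antitone Q (by omega) hsum) hlow
    rw [htop, zero_smul, add_zero] at hsum
    intro j hj hjN
    rcases Nat.lt_or_eq_of_le hjN with hjN | rfl
    exacts [ih hsum j hj (by omega), htop]

theorem eq_zero_of_sum_sum_Icc_smul_mem_valGE {ι : Type*} [Fintype ι] [DecidableEq ι]
    {Q : ι → FF.Place} {r : ι → ℤ} {x : ι → ℕ → F} {c : ι → ℕ → K} (N : ι → ℕ)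
    (hx : ∀ i j, 1 ≤ j → x i j ≠ 0 ∧ FF.v (Q i) (x i j) = r i - j)
    (hother : ∀ i i', i' ≠ i → ∀ j, 1 ≤ j → x i' j ∈ FF.valGE (Q i) (r i))
    (hsum : ∀ i, ∑ i', ∑ j ∈ Icc 1 (N i'), c i' j • x i' j ∈ FF.valGE (Q i) (r i)) :
    ∀ i j, 1 ≤ j → j ≤ N i → c i j = 0 := by
  intro i
  refine eq_zero_of_sum_Icc_smul_mem_valGE (hx i) (N i) ?_
  have hrest : ∑ i' ∈ univ.erase i, ∑ j ∈ Icc 1 (N i'), c i' j • x i' j ∈ FF.valGE (Q i) (r i) :=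
    Submodule.sum_mem _ fun i' hi' => Submodule.sum_mem _ fun j hj =>
      Submodule.smul_mem _ _ (hother i i' (ne_of_mem_erase hi') j (mem_Icc.1 hj).1)
  have h := Submodule.sub_mem _ (hsum i) hrest
  rwa [← Finset.add_sum_erase _ _ (mem_univ i), add_sub_cancel_right] at h

end FFPlaces

theorem Finsupp.single_le_sum_single {ι α : Type*} [Fintype ι] (P : ι → α) (d : ι → ℕ)
    {i : ι} {j : ℕ} (hj : j ≤ d i) : single (P i) (j : ℤ) ≤ ∑ i, single (P i) (d i : ℤ) :=
  (single_mono (by exact_mod_cast hj : (j : ℤ) ≤ d i)).trans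
    (Finset.single_le_sum (fun i _ => single_nonneg.2 (Int.natCast_nonneg _)) (mem_univ i))

section Theorem3

open FFPlaces

variable {K F : Type*} [Field K] [Field F] [Algebra K F] {FF : FFPlaces K F} {s : ℕ} [NeZero s]
  {P : Fin s → FF.Place} {D : FF.Place →₀ ℤ} {β : Fin s → ℕ → F}

theorem sum_smul_mem_RR_add_sum_single (d : Fin s → ℕ) (b : Fin s → ℕ → K)
    (hβ1 : ∀ j : ℕ, 1 ≤ j →
      β 0 j ∈ FF.RR (D + single (P 0) ((j : ℤ) - 1) - single (P 1) ((j : ℤ) - 1)))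
    (hβi : ∀ i : Fin s, i ≠ 0 → ∀ j : ℕ, 1 ≤ j →
      β i j ∈ FF.RR (D + single (P i) (j : ℤ) - single (P 0) (j : ℤ))) :
    ∑ i, ∑ j ∈ Icc 1 (d i), b i j • β i j ∈
      FF.RR (D + ∑ i, single (P i) (d i : ℤ) - single (P 0) 1) := by
  refine Submodule.sum_mem _ fun i _ => Submodule.sum_mem _ fun j hj => Submodule.smul_mem _ _ ?_
  obtain ⟨hj1, hjd⟩ := mem_Icc.1 hj
  have hle := sub_le_sub_right (add_le_add (le_refl D) (single_le_sum_single P d hjd))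
    (single (P 0) 1)
  by_cases hi : i = 0
  · subst hi
    refine RR_mono (le_trans ?_ hle) (hβ1 j hj1)
    calc D + single (P 0) ((j : ℤ) - 1) - single (P 1) ((j : ℤ) - 1)
        ≤ D + single (P 0) ((j : ℤ) - 1) := sub_le_self _ (single_nonneg.2 (by omega))
      _ = D + single (P 0) (j : ℤ) - single (P 0) 1 := by rw [single_sub, add_sub_assoc]
  · refine RR_mono (le_trans ?_ hle) (hβi i hi j hj1)
    gcongr
    exact_mod_cast hj1

theorem eq_zero_of_sum_smul_mem_RR_sub_single (hP : Function.Injective P) (hP01 : P 0 ≠ P 1)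
    (hDsupp : ∀ i : Fin s, i ≠ 0 → D (P i) = 0)
    (hβ1 : ∀ j : ℕ, 1 ≤ j →
      β 0 j ∈ FF.RR (D + single (P 0) ((j : ℤ) - 1) - single (P 1) ((j : ℤ) - 1)) ∧
      β 0 j ∉ FF.RR (D + single (P 0) ((j : ℤ) - 2) - single (P 1) ((j : ℤ) - 1)))
    (hβi : ∀ i : Fin s, i ≠ 0 → ∀ j : ℕ, 1 ≤ j →
      β i j ∈ FF.RR (D + single (P i) (j : ℤ) - single (P 0) (j : ℤ)) ∧
      β i j ∉ FF.RR (D + single (P i) ((j : ℤ) - 1) - single (P 0) (j : ℤ)))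
    (d : Fin s → ℕ) (b : Fin s → ℕ → K)
    (hsum : ∑ i, ∑ j ∈ Icc 1 (d i), b i j • β i j ∈ FF.RR (D - single (P 0) 1)) :
    ∀ i j, 1 ≤ j → j ≤ d i → b i j = 0 := by
  classical
  refine eq_zero_of_sum_sum_Icc_smul_mem_valGE (Q := P)
    (r := fun i => if i = 0 then 1 - D (P 0) else 0) (x := β) (c := b) d ?_ ?_
    fun i => RR_le_valGE (P i) ?_ hsum
  · intro i j hj
    by_cases hi : i = 0
    · subst hi
      obtain ⟨h, h'⟩ := hβ1 j hj
      rw [add_sub_right_comm] at h h'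
      rw [show (j : ℤ) - 2 = (j - 1) - 1 by ring] at h'
      obtain ⟨hne, hv⟩ := v_eq_of_mem_RR_add_single h h'
      refine ⟨hne, ?_⟩
      rw [hv, if_pos rfl, Finsupp.sub_apply, single_eq_of_ne hP01]
      ring
    · obtain ⟨h, h'⟩ := hβi i hi j hj
      rw [add_sub_right_comm] at h h'
      obtain ⟨hne, hv⟩ := v_eq_of_mem_RR_add_single h h'
      refine ⟨hne, ?_⟩
      simp [hv, hi, hDsupp i hi, hP.eq_iff]
  · intro i i' hii' j hj
    by_cases hi' : i' = 0
    · subst hi'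
      have hi : i ≠ 0 := Ne.symm hii'
      refine RR_le_valGE (P i) ?_ (hβ1 j hj).1
      simp only [if_neg hi, Finsupp.sub_apply, Finsupp.add_apply, single_apply, hP.eq_iff,
        if_neg hii', hDsupp i hi]
      split_ifs <;> omega
    · refine RR_le_valGE (P i) ?_ (hβi i' hi' j hj).1
      simp only [Finsupp.sub_apply, Finsupp.add_apply, single_apply, hP.eq_iff, if_neg hii']
      by_cases hi : i = 0
      · subst hi
        rw [if_pos rfl]
        omega
      · simp [hi, Ne.symm hi, hDsupp i hi]
  · by_cases hi : i = 0
    · subst hi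
      simp
    · simp [hi, hDsupp i hi, hP.eq_iff]

end Theorem3

open Finsupp in
/-- The paper's `P₁, …, P_s` are `P 0, …, P (s - 1)`; `hval` says `ν_{Pinf}(β) ≥ m + g` under the
convention `ν(0) = ∞`. -/
theorem theorem3_rank_general (Fq F : Type*) [Field Fq] [Field F] [Algebra Fq F]
    (FF : FFPlaces Fq F) (g : ℕ)
    (s : ℕ) [NeZero s] (hs2 : 2 ≤ s) (P : Fin s → FF.Place)
    (hP : Function.Injective P) (hPdeg : ∀ i, FF.deg (P i) = 1)
    (Pinf : FF.Place) (hPinfdeg : FF.deg Pinf = 1) (hPinfne : ∀ i, Pinf ≠ P i)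
    (D : FF.Place →₀ ℤ) (hdegD : FF.degD D = 2 * g)
    (hDsupp : ∀ i : Fin s, i ≠ 0 → D (P i) = 0) (hDsuppInf : D Pinf = 0)
    (β : Fin s → ℕ → F)
    (hβ1 : ∀ j : ℕ, 1 ≤ j →
      β 0 j ∈ FF.RR (D + single (P 0) ((j : ℤ) - 1) - single (P 1) ((j : ℤ) - 1)) ∧
      β 0 j ∉ FF.RR (D + single (P 0) ((j : ℤ) - 2) - single (P 1) ((j : ℤ) - 1)))
    (hβi : ∀ i : Fin s, i ≠ 0 → ∀ j : ℕ, 1 ≤ j →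
      β i j ∈ FF.RR (D + single (P i) (j : ℤ) - single (P 0) (j : ℤ)) ∧
      β i j ∉ FF.RR (D + single (P i) (j : ℤ) - single (P 0) ((j : ℤ) + 1)) ∧
      β i j ∉ FF.RR (D + single (P i) ((j : ℤ) - 1) - single (P 0) (j : ℤ)))
    (w : Fin g → F) (hwmem : ∀ f, w f ∈ FF.RR (D - single (P 0) 1))
    (m : ℕ) (hm : g < m) (d : Fin s → ℕ)
    (hd2 : ∑ i, d i ≤ m - g)
    (b : Fin s → ℕ → Fq) (a : Fin s → ℕ → Fin g → Fq)
    (hval :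
      (∑ i, ∑ j ∈ Finset.Icc 1 (d i), b i j • β i j) -
          (∑ i, ∑ j ∈ Finset.Icc 1 (d i), b i j • (∑ f, a i j f • w f)) = 0 ∨
        ((m : ℤ) + g) ≤ FF.v Pinf
          ((∑ i, ∑ j ∈ Finset.Icc 1 (d i), b i j • β i j) -
            (∑ i, ∑ j ∈ Finset.Icc 1 (d i), b i j • (∑ f, a i j f • w f)))) :
    ∀ (i : Fin s) (j : ℕ), 1 ≤ j → j ≤ d i → b i j = 0 := by
  have hP01 : P 0 ≠ P 1 := hP.ne fun h => by
    simp [Fin.ext_iff, Nat.mod_eq_of_lt hs2] at h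
  have hα : ∑ i, ∑ j ∈ Finset.Icc 1 (d i), b i j • (∑ f, a i j f • w f) ∈
      FF.RR (D - single (P 0) 1) :=
    Submodule.sum_mem _ fun i _ => Submodule.sum_mem _ fun j _ => Submodule.smul_mem _ _ <|
      Submodule.sum_mem _ fun f _ => Submodule.smul_mem _ _ (hwmem f)
  set E := D + ∑ i, single (P i) (d i : ℤ) - single (P 0) 1
  have hαE := FFPlaces.RR_mono (sub_le_sub_right (le_add_of_nonneg_right (Finset.sum_nonneg
    fun i _ => single_nonneg.2 (Int.natCast_nonneg (d i)))) _ : _ ≤ E) hα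
  have hEinf : E Pinf = 0 := by simp [E, hDsuppInf, fun i => (hPinfne i).symm]
  have hdeg : FF.degD (E - single Pinf ((m : ℤ) + g)) < 0 := by
    have hd2' := (Nat.cast_le (α := ℤ)).2 hd2
    rw [Nat.cast_sum, Nat.cast_sub hm.le] at hd2'
    simp only [E, ← FFPlaces.degDHom_apply, map_sub, map_add, map_sum]
    simp only [FFPlaces.degDHom_apply, FFPlaces.degD_single, hPdeg, hPinfdeg, hdegD, Nat.cast_one,
      one_mul]
    omega
  have hβα := FFPlaces.eq_zero_of_mem_RR_of_degD_neg (FFPlaces.mem_RR_sub_single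
    (sub_mem (sum_smul_mem_RR_add_sum_single d b (fun j hj => (hβ1 j hj).1)
      (fun i hi j hj => (hβi i hi j hj).1)) hαE)
    (by rwa [FFPlaces.mem_valGE_iff, hEinf, sub_zero])) hdeg
  refine eq_zero_of_sum_smul_mem_RR_sub_single hP hP01 hDsupp hβ1
    (fun i hi j hj => ⟨(hβi i hi j hj).1, (hβi i hi j hj).2.2⟩) d b ?_
  rwa [sub_eq_zero.1 hβα]

open Finsupp in
/-- Theorem 3 of the paper (core rank statement). Let `F` be a global function field of
genus `g > 0` over `Fq` with distinct rational places `P 0, …, P (s-1), Pinf` (the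
paper's `P₁, …, P_s, P_∞`) and `D` a positive divisor of degree `2g` with support
avoiding `Pinf, P₂, …, P_s`. Let `β_j^{(i)}` be as in Lemma 3, and `w₁, …, w_g` a basis
of `L(D - P₁)` as in Section 4, with `ν_{Pinf}(w_f) = n_f`, `0 ≤ n₁ < ⋯ < n_g < 2g`.
Suppose `m > g`, `1 ≤ d₁ + ⋯ + d_s ≤ m - g`, and for coefficients
`b_j^{(i)} ∈ Fq` and `a_{j,n_f}^{(i)} ∈ Fq` the element
`β := ∑_i ∑_{j ≤ d_i} b_j^{(i)} β_j^{(i)} - α`, where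
`α := ∑_i ∑_{j ≤ d_i} b_j^{(i)} ∑_f a_{j,n_f}^{(i)} w_f ∈ L(D - P₁)`, satisfies
`ν_{Pinf}(β) ≥ m + g` (with the convention `ν_{Pinf}(0) = ∞`).
Then all `b_j^{(i)} = 0`. -/
theorem theorem3_rank (Fq F : Type*) [Field Fq] [Fintype Fq] [Field F] [Algebra Fq F]
    (FF : FFPlaces Fq F) (g : ℕ) (hg : 0 < g)
    (hRR : ∀ D : FF.Place →₀ ℤ, 2 * (g : ℤ) - 1 ≤ FF.degD D →
      (Module.finrank Fq (FF.RR D) : ℤ) = FF.degD D + 1 - g)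
    (s : ℕ) [NeZero s] (hs2 : 2 ≤ s) (P : Fin s → FF.Place)
    (hP : Function.Injective P) (hPdeg : ∀ i, FF.deg (P i) = 1)
    (Pinf : FF.Place) (hPinfdeg : FF.deg Pinf = 1) (hPinfne : ∀ i, Pinf ≠ P i)
    (D : FF.Place →₀ ℤ) (hDpos : ∀ Q, 0 ≤ D Q) (hdegD : FF.degD D = 2 * g)
    (hDsupp : ∀ i : Fin s, i ≠ 0 → D (P i) = 0) (hDsuppInf : D Pinf = 0)
    (β : Fin s → ℕ → F)
    (hβ1 : ∀ j : ℕ, 1 ≤ j →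
      β 0 j ∈ FF.RR (D + single (P 0) ((j : ℤ) - 1) - single (P 1) ((j : ℤ) - 1)) ∧
      β 0 j ∉ FF.RR (D + single (P 0) ((j : ℤ) - 2) - single (P 1) ((j : ℤ) - 1)))
    (hβi : ∀ i : Fin s, i ≠ 0 → ∀ j : ℕ, 1 ≤ j →
      β i j ∈ FF.RR (D + single (P i) (j : ℤ) - single (P 0) (j : ℤ)) ∧
      β i j ∉ FF.RR (D + single (P i) (j : ℤ) - single (P 0) ((j : ℤ) + 1)) ∧
      β i j ∉ FF.RR (D + single (P i) ((j : ℤ) - 1) - single (P 0) (j : ℤ)))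
    (w : Fin g → F) (hwmem : ∀ f, w f ∈ FF.RR (D - single (P 0) 1))
    (hwli : LinearIndependent Fq w)
    (hwspan : Submodule.span Fq (Set.range w) = FF.RR (D - single (P 0) 1))
    (n : Fin g → ℕ) (hn : ∀ f, FF.v Pinf (w f) = (n f : ℤ))
    (hnmono : StrictMono n) (hnlt : ∀ f, n f < 2 * g)
    (m : ℕ) (hm : g < m) (d : Fin s → ℕ)
    (hd1 : 1 ≤ ∑ i, d i) (hd2 : ∑ i, d i ≤ m - g)
    (b : Fin s → ℕ → Fq) (a : Fin s → ℕ → Fin g → Fq)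
    (hval :
      (∑ i, ∑ j ∈ Finset.Icc 1 (d i), b i j • β i j) -
          (∑ i, ∑ j ∈ Finset.Icc 1 (d i), b i j • (∑ f, a i j f • w f)) = 0 ∨
        ((m : ℤ) + g) ≤ FF.v Pinf
          ((∑ i, ∑ j ∈ Finset.Icc 1 (d i), b i j • β i j) -
            (∑ i, ∑ j ∈ Finset.Icc 1 (d i), b i j • (∑ f, a i j f • w f)))) :
    ∀ (i : Fin s) (j : ℕ), 1 ≤ j → j ≤ d i → b i j = 0 :=
  theorem3_rank_general Fq F FF g s hs2 P hP hPdeg Pinf hPinfdeg hPinfne D hdegD hDsupp hDsuppInf β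
    hβ1 hβi w hwmem m hm d hd2 b a hval
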